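/- arXiv:2004.07434 — 3 statements merged into one kernel-verified Lean document; each statement's English description precedes it below -/
import Mathlib

section
/- Let F be a 2^n × 2^n logical matrix with F δ_N^N = δ_N^N (N = 2^n), partitioned with top-left block F11 of size (N−1)×(N−1). The discrete dynamical system x(t+1) = F x(t) on Δ_N = {δ_N^1,…,δ_N^N} satisfies lim_{t→∞} x(t) = δ_N^N for every initial state x(0) ∈ Δ_N if and only if there exists λ1 ∈ ℝ^{N−1} with λ1 > 0 and F11^T λ1 − λ1 < 0 (entrywise). -/
open Matrix BigOperators Filter

/-- A matrix is *logical* if every column is a standard basis vector. -/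
def IsLogical {a b : ℕ} (M : Matrix (Fin a) (Fin b) ℝ) : Prop :=
  ∀ j : Fin b, ∃ i : Fin a, ∀ i' : Fin a, M i' j = if i' = i then 1 else 0

/-- Lyapunov stability criterion for Boolean networks: the system
`x(t+1) = F x(t)` on `Δ_N` converges to `δ_N^N` from every initial state iff
there exists `λ1 > 0` with `F11ᵀ λ1 − λ1 < 0` entrywise. -/
theorem boolean_network_stable_iff_lyapunov {n m : ℕ} (hN : m + 1 = 2 ^ n)
    (F : Matrix (Fin (m + 1)) (Fin (m + 1)) ℝ) (hF : IsLogical F)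
    (hfix : F *ᵥ (Pi.single (Fin.last m) 1) = Pi.single (Fin.last m) 1) :
    (∀ x0 : Fin (m + 1) → ℝ, (∃ k, x0 = Pi.single k 1) →
      Tendsto (fun t : ℕ => (F ^ t) *ᵥ x0) atTop
        (nhds (Pi.single (Fin.last m) 1))) ↔
    (∃ l1 : Fin m → ℝ, (∀ i, 0 < l1 i) ∧
      ∀ i, ((F.submatrix Fin.castSucc Fin.castSucc)ᵀ *ᵥ l1) i - l1 i < 0) := by
  classical
  choose f hf using hF
  -- Step on basis vectors
  have hstep : ∀ j : Fin (m + 1), F *ᵥ Pi.single j 1 = Pi.single (f j) 1 := by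
    intro j
    funext i
    simp [Matrix.mulVec, dotProduct, hf, Pi.single_apply]
  have hiter : ∀ (t : ℕ) (j : Fin (m + 1)),
      (F ^ t) *ᵥ Pi.single j 1 = Pi.single (f^[t] j) 1 := by
    intro t
    induction t with
    | zero => intro j; rw [pow_zero, Matrix.one_mulVec, Function.iterate_zero_apply]
    | succ t ih =>
        intro j
        rw [pow_succ, ← Matrix.mulVec_mulVec, hstep, Function.iterate_succ_apply, ih]
  have hlast : f (Fin.last m) = Fin.last m := by
    have h1 : (Pi.single (f (Fin.last m)) 1 : Fin (m+1) → ℝ) = Pi.single (Fin.last m) 1 := by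
      rw [← hstep, hfix]
    by_contra hne
    have h2 := congrFun h1 (Fin.last m)
    simp [Pi.single_apply, Ne.symm hne] at h2
  -- Computation of the transposed-submatrix product
  have hsum : ∀ (l1 : Fin m → ℝ) (i : Fin m),
      ((F.submatrix Fin.castSucc Fin.castSucc)ᵀ *ᵥ l1) i
        = Fin.lastCases 0 l1 (f (Fin.castSucc i)) := by
    intro l1 i
    rcases Fin.eq_castSucc_or_eq_last (f (Fin.castSucc i)) with ⟨k, hk⟩ | hk
    · rw [hk, Fin.lastCases_castSucc]
      simp [Matrix.mulVec, dotProduct, hf, hk, Fin.castSucc_inj]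
    · rw [hk, Fin.lastCases_last]
      have : ∀ j : Fin m, Fin.castSucc j ≠ Fin.last m := fun j =>
        (Fin.castSucc_lt_last j).ne
      simp [Matrix.mulVec, dotProduct, hf, hk, this]
  constructor
  · -- stability → Lyapunov function
    intro h
    have hreach : ∀ k : Fin (m + 1), ∃ t, f^[t] k = Fin.last m := by
      intro k
      have h1 := h (Pi.single k 1) ⟨k, rfl⟩
      simp only [hiter] at h1
      have h2 : Tendsto (fun t => (Pi.single (f^[t] k) 1 : Fin (m+1) → ℝ) (Fin.last m)) atTop
          (nhds ((Pi.single (Fin.last m) 1 : Fin (m+1) → ℝ) (Fin.last m))) :=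
        ((continuous_apply (Fin.last m)).tendsto _).comp h1
      rw [Pi.single_eq_same] at h2
      have h3 := h2.eventually (eventually_gt_nhds (show (1:ℝ)/2 < 1 by norm_num))
      obtain ⟨t, ht⟩ := h3.exists
      refine ⟨t, ?_⟩
      by_contra hne
      rw [Pi.single_apply, if_neg (Ne.symm hne)] at ht
      norm_num at ht
    set Wnat : Fin (m + 1) → ℕ := fun k => Nat.find (hreach k) with hWnat
    have hWnat_pos : ∀ k, k ≠ Fin.last m → 0 < Wnat k := by
      intro k hk
      rcases Nat.eq_zero_or_pos (Wnat k) with h0 | h0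
      · exact absurd (by simpa using Nat.find_eq_zero (hreach k) |>.mp h0) hk
      · exact h0
    have hWnat_dec : ∀ k, k ≠ Fin.last m → Wnat (f k) < Wnat k := by
      intro k hk
      have hpos := hWnat_pos k hk
      have hspec : f^[Wnat k] k = Fin.last m := Nat.find_spec (hreach k)
      obtain ⟨s, hs⟩ := Nat.exists_eq_succ_of_ne_zero hpos.ne'
      have : f^[s] (f k) = Fin.last m := by
        rw [← Function.iterate_succ_apply, ← hs]; exact hspec
      have hle : Wnat (f k) ≤ s := Nat.find_le this
      omega
    refine ⟨fun i => (Wnat (Fin.castSucc i) : ℝ), ?_, ?_⟩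
    · intro i
      exact Nat.cast_pos.mpr (hWnat_pos _ (Fin.castSucc_lt_last i).ne)
    · intro i
      rw [hsum, sub_neg]
      have hkne : Fin.castSucc i ≠ Fin.last m := (Fin.castSucc_lt_last i).ne
      rcases Fin.eq_castSucc_or_eq_last (f (Fin.castSucc i)) with ⟨k, hk⟩ | hk
      · rw [hk, Fin.lastCases_castSucc]
        have := hWnat_dec _ hkne
        rw [hk] at this
        exact Nat.cast_lt.mpr this
      · rw [hk, Fin.lastCases_last]
        exact Nat.cast_pos.mpr (hWnat_pos _ hkne)
  · -- Lyapunov function → stability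
    rintro ⟨l1, hpos, hlt⟩
    set W : Fin (m + 1) → ℝ := Fin.lastCases 0 l1 with hWdef
    have hW : ∀ k, k ≠ Fin.last m → W (f k) < W k := by
      intro k hk
      rcases Fin.eq_castSucc_or_eq_last k with ⟨i, hi⟩ | hi
      · subst hi
        have := hlt i
        rw [hsum, sub_neg] at this
        simpa [hWdef, Fin.lastCases_castSucc] using this
      · exact absurd hi hk
    have hreach : ∀ k : Fin (m + 1), ∃ t, f^[t] k = Fin.last m := by
      intro k
      by_contra hno
      push_neg at hno
      have hanti : StrictAnti (fun t : ℕ => W (f^[t] k)) := by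
        apply strictAnti_nat_of_succ_lt
        intro t
        rw [Function.iterate_succ_apply']
        exact hW _ (hno t)
      have hinj : Function.Injective (fun t : ℕ => f^[t] k) := by
        intro a b hab
        have hW2 : W (f^[a] k) = W (f^[b] k) := congrArg W hab
        exact hanti.injective hW2
      obtain ⟨a, b, hne, heq⟩ := Finite.exists_ne_map_eq_of_infinite
        (fun t : ℕ => f^[t] k)
      exact hne (hinj heq)
    intro x0 hx0
    obtain ⟨k, rfl⟩ := hx0
    simp only [hiter]
    obtain ⟨T, hT⟩ := hreach k
    have hconst : ∀ t ≥ T, f^[t] k = Fin.last m := by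
      intro t ht
      have : f^[t] k = f^[t - T] (f^[T] k) := by
        rw [← Function.iterate_add_apply, Nat.sub_add_cancel ht]
      rw [this, hT, Function.iterate_fixed hlast]
    apply tendsto_const_nhds.congr'
    filter_upwards [eventually_ge_atTop T] with t ht
    rw [hconst t ht]
end

section
/- Let G = Σ_{i=1}^s p_i G_i with G_i ∈ 𝓛_{2^n × 2^n} logical matrices, p_i > 0, Σ p_i = 1, and suppose G δ_N^N = δ_N^N (N = 2^n). Write G = [[G11, 0],[G21, 1]] with G11 of size (N−1)×(N−1). Then lim_{t→∞} G^t x(0) = δ_N^N for every probability vector x(0) (nonnegative entries summing to 1) if and only if ρ(G11) < 1. -/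
open Matrix BigOperators Filter Finset

/-- The spectral radius of a real square matrix. -/
noncomputable def specRad {m : ℕ} (A : Matrix (Fin m) (Fin m) ℝ) : ℝ :=
  ⨆ μ ∈ spectrum ℂ (A.map (algebraMap ℝ ℂ)), ‖μ‖

lemma specRad_lt_one_iff {k : ℕ} (A : Matrix (Fin k) (Fin k) ℝ) :
    specRad A < 1 ↔ ∀ μ ∈ spectrum ℂ (A.map (algebraMap ℝ ℂ)), ‖μ‖ < 1 := by
  set S := spectrum ℂ (A.map (algebraMap ℝ ℂ)) with hS
  have hfin : S.Finite := Matrix.finite_spectrum _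
  set f : ℂ → ℝ := fun μ => ⨆ _ : μ ∈ S, ‖μ‖ with hf
  have hmem : ∀ μ, f μ ∈ insert (0:ℝ) (norm '' S) := by
    intro μ
    by_cases h : μ ∈ S
    · rw [hf]; simp only [ciSup_pos h]
      exact Set.mem_insert_of_mem _ ⟨μ, h, rfl⟩
    · haveI : IsEmpty (μ ∈ S) := ⟨h⟩
      rw [hf]; simp only [Real.iSup_of_isEmpty]
      exact Set.mem_insert _ _
  have hTfin : (insert (0:ℝ) (norm '' S)).Finite := (hfin.image _).insert 0
  have hbdd : BddAbove (Set.range f) :=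
    hTfin.bddAbove.mono (Set.range_subset_iff.mpr hmem)
  constructor
  · intro h μ hμ
    have : ‖μ‖ ≤ specRad A := by
      have h1 : f μ = ‖μ‖ := by rw [hf]; simp [ciSup_pos hμ]
      calc ‖μ‖ = f μ := h1.symm
        _ ≤ ⨆ μ, f μ := le_ciSup hbdd μ
    linarith
  · intro h
    have h1 : ∀ x ∈ insert (0:ℝ) (norm '' S), x < 1 := by
      rintro x (rfl | ⟨μ, hμ, rfl⟩)
      · norm_num
      · exact h μ hμ
    have h2 : sSup (insert (0:ℝ) (norm '' S)) < 1 :=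
      (hTfin.csSup_lt_iff (Set.insert_nonempty _ _)).mpr h1
    have h3 : specRad A ≤ sSup (insert (0:ℝ) (norm '' S)) :=
      ciSup_le fun μ => le_csSup hTfin.bddAbove (hmem μ)
    linarith

lemma mapPow {k : ℕ} (A : Matrix (Fin k) (Fin k) ℝ) (t : ℕ) :
    (A.map (algebraMap ℝ ℂ)) ^ t = (A ^ t).map (algebraMap ℝ ℂ) := by
  rw [← RingHom.mapMatrix_apply, ← RingHom.mapMatrix_apply, map_pow]

lemma abs_lt_one_of_pow_tendsto {k : ℕ} (A : Matrix (Fin k) (Fin k) ℝ)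
    (h : ∀ i j, Tendsto (fun t : ℕ => (A ^ t) i j) atTop (nhds 0)) :
    ∀ μ ∈ spectrum ℂ (A.map (algebraMap ℝ ℂ)), ‖μ‖ < 1 := by
  set B := A.map (algebraMap ℝ ℂ) with hB
  intro μ hμ
  rw [spectrum.mem_iff] at hμ
  have hdet : (algebraMap ℂ (Matrix (Fin k) (Fin k) ℂ) μ - B).det = 0 := by
    by_contra hd
    exact hμ ((Matrix.isUnit_iff_isUnit_det _).mpr (Ne.isUnit hd))
  obtain ⟨v, hv0, hv⟩ := (Matrix.exists_mulVec_eq_zero_iff).mpr hdet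
  have hBv : B *ᵥ v = μ • v := by
    rw [Matrix.sub_mulVec] at hv
    have h1 : (algebraMap ℂ (Matrix (Fin k) (Fin k) ℂ) μ) *ᵥ v = μ • v := by
      simp [Algebra.algebraMap_eq_smul_one, Matrix.smul_mulVec, Matrix.one_mulVec]
    rw [h1] at hv
    exact (sub_eq_zero.mp hv).symm
  have hpow : ∀ t : ℕ, (B ^ t) *ᵥ v = μ ^ t • v := by
    intro t
    induction t with
    | zero => simp [Matrix.one_mulVec]
    | succ t ih =>
      rw [pow_succ', ← Matrix.mulVec_mulVec, ih, Matrix.mulVec_smul, hBv, smul_smul, ← pow_succ]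
  obtain ⟨i0, hi0⟩ : ∃ i0, v i0 ≠ 0 := Function.ne_iff.mp hv0
  have hBent : ∀ i j, Tendsto (fun t : ℕ => (B ^ t) i j) atTop (nhds 0) := by
    intro i j
    have he : (fun t : ℕ => (B ^ t) i j) = fun t : ℕ => (((A ^ t) i j : ℝ) : ℂ) := by
      funext t; rw [hB, mapPow]; rfl
    rw [he]
    have := (Complex.continuous_ofReal.tendsto 0).comp (h i j)
    simpa [Function.comp_def] using this
  have hsum : Tendsto (fun t : ℕ => ((B ^ t) *ᵥ v) i0) atTop (nhds 0) := by
    have he : ∀ t : ℕ, ((B ^ t) *ᵥ v) i0 = ∑ j, (B ^ t) i0 j * v j := fun t => rfl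
    simp only [he]
    have := tendsto_finset_sum (univ : Finset (Fin k))
      (fun j _ => (hBent i0 j).mul_const (v j))
    simpa using this
  have hμt : Tendsto (fun t : ℕ => μ ^ t * v i0) atTop (nhds 0) := by
    have he : ∀ t : ℕ, ((B ^ t) *ᵥ v) i0 = μ ^ t * v i0 := fun t => by
      rw [hpow]; simp
    simpa only [he] using hsum
  have hμ0 : Tendsto (fun t : ℕ => μ ^ t) atTop (nhds 0) := by
    have := hμt.mul_const (v i0)⁻¹
    simpa [mul_assoc, mul_inv_cancel₀ hi0] using this
  by_contra habs
  push_neg at habs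
  have h1 : ∀ t : ℕ, (1:ℝ) ≤ ‖μ ^ t‖ := by
    intro t
    rw [norm_pow]
    apply one_le_pow₀
    exact habs
  have h2 : ∀ᶠ t : ℕ in atTop, ‖μ ^ t‖ < 1 := by
    have h3 := hμ0.norm
    rw [norm_zero] at h3
    exact h3.eventually_lt_const one_pos
  obtain ⟨t, ht⟩ := h2.exists
  linarith [h1 t]

section Gelfand

attribute [local instance] Matrix.linftyOpNormedRing Matrix.linftyOpNormedAlgebra

lemma entry_norm_le {k : ℕ} (M : Matrix (Fin k) (Fin k) ℂ) (i j : Fin k) :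
    ‖M i j‖ ≤ ‖M‖ := by
  have h : ‖M i j‖₊ ≤ ‖M‖₊ := by
    rw [Matrix.linfty_opNNNorm_def]
    exact (Finset.single_le_sum (f := fun j' => ‖M i j'‖₊) (fun _ _ => zero_le)
      (mem_univ j)).trans (Finset.le_sup (f := fun i' => ∑ j' : Fin k, ‖M i' j'‖₊) (mem_univ i))
  exact_mod_cast h

lemma pow_entry_tendsto_zero {k : ℕ} (A : Matrix (Fin k) (Fin k) ℝ)
    (h : ∀ μ ∈ spectrum ℂ (A.map (algebraMap ℝ ℂ)), ‖μ‖ < 1) :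
    ∀ i j, Tendsto (fun t : ℕ => (A ^ t) i j) atTop (nhds 0) := by
  intro i j
  haveI : Nonempty (Fin k) := ⟨i⟩
  haveI : CompleteSpace (Matrix (Fin k) (Fin k) ℂ) := FiniteDimensional.complete ℂ _
  set B := A.map (algebraMap ℝ ℂ) with hB
  have hsr : spectralRadius ℂ B < 1 := by
    have := spectrum.spectralRadius_lt_of_forall_lt (a := B) (r := 1) ?_
    · simpa using this
    · intro z hz
      rw [← NNReal.coe_lt_coe]
      simpa [coe_nnnorm] using h z hz
  obtain ⟨c, hc1, hc2⟩ := exists_between hsr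
  have hgel := spectrum.pow_nnnorm_pow_one_div_tendsto_nhds_spectralRadius B
  have hev : ∀ᶠ t : ℕ in atTop, (‖B ^ t‖₊ : ENNReal) ^ (1 / (t:ℝ)) < c :=
    hgel.eventually_lt_const hc1
  have hcne : c ≠ ⊤ := (hc2.trans_le le_top).ne
  set c' : ℝ := c.toReal with hc'
  have hc'0 : 0 ≤ c' := ENNReal.toReal_nonneg
  have hc'1 : c' < 1 := by
    rw [hc', ← ENNReal.toReal_one]
    exact (ENNReal.toReal_lt_toReal hcne ENNReal.one_ne_top).mpr hc2
  have key : ∀ᶠ t : ℕ in atTop, ‖B ^ t‖ ≤ c' ^ t := by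
    filter_upwards [hev, eventually_ge_atTop 1] with t ht ht1
    have ht0 : (t : ℝ) ≠ 0 := by positivity
    have hx : ((‖B ^ t‖₊ : ENNReal)) < c ^ (t : ℝ) := by
      have h2 := ENNReal.rpow_lt_rpow ht (by positivity : (0:ℝ) < (t:ℝ))
      rwa [← ENNReal.rpow_mul, one_div, inv_mul_cancel₀ ht0, ENNReal.rpow_one] at h2
    have hx2 : ‖B ^ t‖ ≤ (c ^ (t:ℝ)).toReal := by
      have := ENNReal.toReal_le_toReal (by simp)
        (by simp [ENNReal.rpow_eq_top_iff, hcne]) |>.mpr hx.le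
      simpa using this
    calc ‖B ^ t‖ ≤ (c ^ (t:ℝ)).toReal := hx2
      _ = c' ^ t := by rw [hc', ← ENNReal.toReal_rpow, Real.rpow_natCast]
  have hnorm0 : Tendsto (fun t : ℕ => ‖B ^ t‖) atTop (nhds 0) :=
    squeeze_zero' (Eventually.of_forall fun t => norm_nonneg _) key
      (tendsto_pow_atTop_nhds_zero_of_lt_one hc'0 hc'1)
  apply squeeze_zero_norm' ?_ hnorm0
  filter_upwards with t
  have he : |(A ^ t) i j| = ‖(B ^ t) i j‖ := by
    rw [hB, mapPow]
    simp [Matrix.map_apply, Complex.norm_real]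
  rw [Real.norm_eq_abs, he]
  exact entry_norm_le _ i j

end Gelfand

/-- Stochastic stability criterion for probabilistic Boolean networks:
for `G = Σ pᵢ Gᵢ` a convex combination of logical matrices fixing `δ_N^N`,
`Gᵗ x(0) → δ_N^N` for every probability vector `x(0)` iff `ρ(G11) < 1`. -/
theorem pbn_stochastically_stable_iff_specRad_lt_one {n m s : ℕ}
    (hN : m + 1 = 2 ^ n) (p : Fin s → ℝ)
    (G' : Fin s → Matrix (Fin (m + 1)) (Fin (m + 1)) ℝ)
    (hG : ∀ i, IsLogical (G' i)) (hp : ∀ i, 0 < p i) (hps : ∑ i, p i = 1)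
    (G : Matrix (Fin (m + 1)) (Fin (m + 1)) ℝ) (hGdef : G = ∑ i, p i • G' i)
    (hfix : G *ᵥ (Pi.single (Fin.last m) 1) = Pi.single (Fin.last m) 1) :
    (∀ x0 : Fin (m + 1) → ℝ, (∀ i, 0 ≤ x0 i) → ∑ i, x0 i = 1 →
      Tendsto (fun t : ℕ => (G ^ t) *ᵥ x0) atTop
        (nhds (Pi.single (Fin.last m) 1))) ↔
    specRad (G.submatrix Fin.castSucc Fin.castSucc) < 1 := by
  set G11 := G.submatrix Fin.castSucc Fin.castSucc with hG11
  -- powers of G fix the last basis vector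
  have hlast : ∀ t : ℕ, (G ^ t) *ᵥ Pi.single (Fin.last m) 1 = Pi.single (Fin.last m) 1 := by
    intro t
    induction t with
    | zero => rw [pow_zero, Matrix.one_mulVec]
    | succ t ih => rw [pow_succ, ← Matrix.mulVec_mulVec, hfix, ih]
  have hentry_last : ∀ (t : ℕ) (i : Fin (m+1)),
      (G ^ t) i (Fin.last m) = if i = Fin.last m then 1 else 0 := by
    intro t i
    have h1 := congrFun (hlast t) i
    rw [Matrix.mulVec_single_one] at h1
    simp only [Matrix.col_apply] at h1
    rw [h1, Pi.single_apply]
  -- block structure of powers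
  have hblock : ∀ (t : ℕ) (i j : Fin m),
      (G ^ t) (Fin.castSucc i) (Fin.castSucc j) = (G11 ^ t) i j := by
    intro t
    induction t with
    | zero =>
      intro i j
      simp [Matrix.one_apply, Fin.castSucc_inj]
    | succ t ih =>
      intro i j
      rw [pow_succ, pow_succ, Matrix.mul_apply, Matrix.mul_apply, Fin.sum_univ_castSucc]
      have h0 : (G ^ t) (Fin.castSucc i) (Fin.last m) = 0 := by
        rw [hentry_last]
        simp [(Fin.castSucc_lt_last i).ne]
      rw [h0, zero_mul, add_zero]
      exact Finset.sum_congr rfl fun k _ => by rw [ih i k]; rfl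
  -- column sums of G equal one
  have hGcolsum : ∀ j, ∑ i, G i j = 1 := by
    intro j
    rw [hGdef]
    simp only [Matrix.sum_apply, Matrix.smul_apply, smul_eq_mul]
    rw [Finset.sum_comm]
    calc ∑ s', ∑ i, p s' * (G' s') i j = ∑ s', p s' := by
          refine sum_congr rfl fun s' _ => ?_
          obtain ⟨i0, h0⟩ := hG s' j
          rw [← Finset.mul_sum]
          have hsum1 : ∑ i, (G' s') i j = 1 := by
            simp only [h0]
            simp
          rw [hsum1, mul_one]
      _ = 1 := hps
  -- mulVec by G preserves total sum
  have hmulsum : ∀ v : Fin (m+1) → ℝ, ∑ i, (G *ᵥ v) i = ∑ i, v i := by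
    intro v
    simp only [Matrix.mulVec, dotProduct]
    rw [Finset.sum_comm]
    refine sum_congr rfl fun j _ => ?_
    rw [← Finset.sum_mul, hGcolsum, one_mul]
  have hpowsum : ∀ (t : ℕ) (v : Fin (m+1) → ℝ), ∑ i, ((G ^ t) *ᵥ v) i = ∑ i, v i := by
    intro t
    induction t with
    | zero => intro v; simp [Matrix.one_mulVec]
    | succ t ih =>
      intro v
      rw [pow_succ', ← Matrix.mulVec_mulVec, hmulsum, ih]
  -- coordinate formula for cast indices
  have hcoord : ∀ (v : Fin (m+1) → ℝ) (t : ℕ) (i : Fin m),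
      ((G ^ t) *ᵥ v) (Fin.castSucc i) = ∑ j : Fin m, (G11 ^ t) i j * v (Fin.castSucc j) := by
    intro v t i
    show ∑ k, (G ^ t) (Fin.castSucc i) k * v k = _
    rw [Fin.sum_univ_castSucc]
    have h0 : (G ^ t) (Fin.castSucc i) (Fin.last m) = 0 := by
      rw [hentry_last]
      simp [(Fin.castSucc_lt_last i).ne]
    rw [h0, zero_mul, add_zero]
    exact Finset.sum_congr rfl fun j _ => by rw [hblock t i j]
  constructor
  · -- stability implies spectral radius < 1
    intro hstab
    refine (specRad_lt_one_iff _).mpr (abs_lt_one_of_pow_tendsto _ ?_)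
    intro i j
    set x0 : Fin (m+1) → ℝ := Pi.single (Fin.castSucc j) 1 with hx0
    have h0 : ∀ k, 0 ≤ x0 k := by
      intro k
      rw [hx0, Pi.single_apply]
      split <;> norm_num
    have h1 : ∑ k, x0 k = 1 := by
      rw [hx0]
      simp [Pi.single_apply]
    have ht := (tendsto_pi_nhds.mp (hstab x0 h0 h1)) (Fin.castSucc i)
    have hzero : (Pi.single (Fin.last m) 1 : Fin (m+1) → ℝ) (Fin.castSucc i) = 0 := by
      rw [Pi.single_apply]
      simp [(Fin.castSucc_lt_last i).ne]
    rw [hzero] at ht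
    refine ht.congr fun t => ?_
    have h2 := congrFun (Matrix.mulVec_single_one (G ^ t) (Fin.castSucc j)) (Fin.castSucc i)
    rw [Matrix.col_apply] at h2
    rw [hx0, h2, hblock t i j]
  · -- spectral radius < 1 implies stability
    intro hrad x0 h0 h1
    have hent : ∀ i j, Tendsto (fun t : ℕ => (G11 ^ t) i j) atTop (nhds 0) :=
      pow_entry_tendsto_zero _ ((specRad_lt_one_iff _).mp hrad)
    have hcast : ∀ i : Fin m,
        Tendsto (fun t : ℕ => ((G ^ t) *ᵥ x0) (Fin.castSucc i)) atTop (nhds 0) := by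
      intro i
      have he : (fun t : ℕ => ((G ^ t) *ᵥ x0) (Fin.castSucc i))
          = fun t : ℕ => ∑ j, (G11 ^ t) i j * x0 (Fin.castSucc j) :=
        funext fun t => hcoord x0 t i
      rw [he]
      have := tendsto_finset_sum (univ : Finset (Fin m))
        (fun j _ => (hent i j).mul_const (x0 (Fin.castSucc j)))
      simpa using this
    rw [tendsto_pi_nhds]
    intro k
    refine Fin.lastCases ?_ ?_ k
    · -- last coordinate tends to 1
      have hval : ∀ t : ℕ, ((G ^ t) *ᵥ x0) (Fin.last m)
          = 1 - ∑ i : Fin m, ((G ^ t) *ᵥ x0) (Fin.castSucc i) := by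
        intro t
        have hs := hpowsum t x0
        rw [h1, Fin.sum_univ_castSucc] at hs
        linarith
      have htend : Tendsto
          (fun t : ℕ => 1 - ∑ i : Fin m, ((G ^ t) *ᵥ x0) (Fin.castSucc i)) atTop (nhds 1) := by
        have hsum0 := tendsto_finset_sum (univ : Finset (Fin m)) (fun i _ => hcast i)
        have := tendsto_const_nhds (x := (1:ℝ)) (f := atTop (α := ℕ)) |>.sub hsum0
        simpa using this
      have hone : (Pi.single (Fin.last m) 1 : Fin (m+1) → ℝ) (Fin.last m) = 1 := by simp
      rw [hone]
      exact htend.congr fun t => (hval t).symm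
    · intro i
      have hzero : (Pi.single (Fin.last m) 1 : Fin (m+1) → ℝ) (Fin.castSucc i) = 0 := by
        rw [Pi.single_apply]
        simp [(Fin.castSucc_lt_last i).ne]
      rw [hzero]
      exact hcast i
end

section
/- Under the hypotheses of the previous statement (G column-stochastic nonnegative with block form G = [[G11, 0],[G21, 1]]), ρ(G11) < 1 holds if and only if there exists ν1 ∈ ℝ^{N−1} with ν1 > 0 and G11^T ν1 − ν1 < 0 entrywise; in that case V(y) = (ν1^T, 0) y satisfies V(y) > 0 for y ∈ Δ_N \ {δ_N^N}, V(δ_N^N) = 0, and ν^T G y < ν^T y for all y ∈ Δ_N with y ≠ δ_N^N. -/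
open Matrix BigOperators Filter Finset

/-- Key weighted estimate: if `A ≥ 0`, `w > 0` and `Aᵀ w ≤ c • w`, then every
complex spectral value `μ` of `A` satisfies `|μ| ≤ c`. -/
lemma spec_abs_le_of_weight {m : ℕ} (A : Matrix (Fin m) (Fin m) ℝ)
    (hA : ∀ i j, 0 ≤ A i j) (w : Fin m → ℝ) (hw : ∀ i, 0 < w i) (c : ℝ)
    (h : ∀ j, (Aᵀ *ᵥ w) j ≤ c * w j) {μ : ℂ}
    (hμ : μ ∈ spectrum ℂ (A.map (algebraMap ℝ ℂ))) : ‖μ‖ ≤ c := by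
  set Ac := A.map (algebraMap ℝ ℂ) with hAc
  rw [spectrum.mem_iff] at hμ
  have hdet : (algebraMap ℂ (Matrix (Fin m) (Fin m) ℂ) μ - Ac).det = 0 := by
    by_contra h0
    exact hμ ((Matrix.isUnit_iff_isUnit_det _).mpr (isUnit_iff_ne_zero.mpr h0))
  obtain ⟨v, hv0, hv⟩ := (Matrix.exists_mulVec_eq_zero_iff).mpr hdet
  have hAv : Ac *ᵥ v = μ • v := by
    have h1 : (algebraMap ℂ (Matrix (Fin m) (Fin m) ℂ) μ) *ᵥ v = μ • v := by
      rw [Algebra.algebraMap_eq_smul_one, Matrix.smul_mulVec, Matrix.one_mulVec]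
    have := hv
    rw [Matrix.sub_mulVec, h1, sub_eq_zero] at this
    exact this.symm
  -- entrywise estimate
  have key : ∀ i, ‖μ‖ * ‖v i‖ ≤ ∑ j, A i j * ‖v j‖ := by
    intro i
    have h1 : μ * v i = ∑ j, (algebraMap ℝ ℂ (A i j)) * v j := by
      have := congrFun hAv i
      simp only [Matrix.mulVec, dotProduct, Pi.smul_apply, smul_eq_mul,
        Matrix.map_apply, hAc] at this
      exact this.symm
    calc ‖μ‖ * ‖v i‖ = ‖μ * v i‖ := (norm_mul _ _).symm
      _ = ‖∑ j, (algebraMap ℝ ℂ (A i j)) * v j‖ := by rw [h1]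
      _ ≤ ∑ j, ‖(algebraMap ℝ ℂ (A i j)) * v j‖ :=
          norm_sum_le _ _
      _ = ∑ j, A i j * ‖v j‖ := by
          refine Finset.sum_congr rfl fun j _ => ?_
          rw [norm_mul]
          simp [Complex.norm_real, Real.norm_eq_abs, abs_of_nonneg (hA i j)]
  set u : Fin m → ℝ := fun i => ‖v i‖ with hu
  have hupos : ∀ i, 0 ≤ u i := fun i => norm_nonneg _
  obtain ⟨i0, hi0⟩ := Function.ne_iff.mp hv0
  have hS : 0 < ∑ i, w i * u i := by
    refine Finset.sum_pos' (fun i _ => mul_nonneg (hw i).le (hupos i)) ⟨i0, mem_univ _, ?_⟩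
    exact mul_pos (hw i0) (by simpa [hu] using norm_pos_iff.mpr hi0)
  have main : ‖μ‖ * (∑ i, w i * u i) ≤ c * (∑ i, w i * u i) := by
    calc ‖μ‖ * (∑ i, w i * u i)
        = ∑ i, w i * (‖μ‖ * u i) := by rw [Finset.mul_sum]; apply Finset.sum_congr rfl; intros; ring
      _ ≤ ∑ i, w i * ∑ j, A i j * u j :=
          Finset.sum_le_sum fun i _ => mul_le_mul_of_nonneg_left (key i) (hw i).le
      _ = ∑ j, (∑ i, w i * A i j) * u j := by
          simp_rw [Finset.mul_sum, Finset.sum_mul]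
          rw [Finset.sum_comm]
          apply Finset.sum_congr rfl; intros; apply Finset.sum_congr rfl; intros; ring
      _ ≤ ∑ j, (c * w j) * u j := by
          refine Finset.sum_le_sum fun j _ => mul_le_mul_of_nonneg_right ?_ (hupos j)
          have : (Aᵀ *ᵥ w) j = ∑ i, w i * A i j := by
            simp [Matrix.mulVec, dotProduct, Matrix.transpose_apply, mul_comm]
          rw [← this]; exact h j
      _ = c * (∑ i, w i * u i) := by rw [Finset.mul_sum]; apply Finset.sum_congr rfl; intros; ring
  exact le_of_mul_le_mul_right main hS

/-- For a column-stochastic nonnegative `G` with block form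
`G = [[G11, 0],[G21, 1]]`: `ρ(G11) < 1` iff there is `ν1 > 0` with
`G11ᵀ ν1 − ν1 < 0`; and any such `ν1` yields a Lyapunov function
`V(y) = νᵀ y` (with `ν = (ν1ᵀ, 0)ᵀ`) positive away from `δ_N^N`, zero at
`δ_N^N`, and strictly decreasing in expectation: `νᵀ G y < νᵀ y` on
`Δ_N \ {δ_N^N}`. -/
theorem pbn_lyapunov_characterization {n m : ℕ} (hN : m + 1 = 2 ^ n)
    (G : Matrix (Fin (m + 1)) (Fin (m + 1)) ℝ)
    (hGnn : ∀ i j, 0 ≤ G i j) (hcs : ∀ j, ∑ i, G i j = 1)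
    (hG12 : ∀ i : Fin m, G i.castSucc (Fin.last m) = 0)
    (hG22 : G (Fin.last m) (Fin.last m) = 1) :
    (specRad (G.submatrix Fin.castSucc Fin.castSucc) < 1 ↔
      ∃ ν1 : Fin m → ℝ, (∀ i, 0 < ν1 i) ∧
        ∀ i, ((G.submatrix Fin.castSucc Fin.castSucc)ᵀ *ᵥ ν1) i - ν1 i < 0) ∧
    (∀ ν1 : Fin m → ℝ, (∀ i, 0 < ν1 i) →
      (∀ i, ((G.submatrix Fin.castSucc Fin.castSucc)ᵀ *ᵥ ν1) i - ν1 i < 0) →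
      (∀ y : Fin (m + 1) → ℝ, (∃ k, y = Pi.single k 1) →
          y ≠ Pi.single (Fin.last m) 1 → 0 < (Fin.snoc ν1 0 : Fin (m+1) → ℝ) ⬝ᵥ y) ∧
      (Fin.snoc ν1 0 : Fin (m+1) → ℝ) ⬝ᵥ (Pi.single (Fin.last m) 1) = 0 ∧
      (∀ y : Fin (m + 1) → ℝ, (∃ k, y = Pi.single k 1) →
          y ≠ Pi.single (Fin.last m) 1 →
          (Fin.snoc ν1 0 : Fin (m+1) → ℝ) ⬝ᵥ (G *ᵥ y) <
            (Fin.snoc ν1 0 : Fin (m+1) → ℝ) ⬝ᵥ y)) := by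
  set A := G.submatrix (Fin.castSucc : Fin m → Fin (m+1)) Fin.castSucc with hAdef
  have hAnn : ∀ i j, 0 ≤ A i j := fun i j => hGnn _ _
  have hAcol : ∀ j, ∑ i, A i j ≤ 1 := by
    intro j
    have h1 : ∑ i : Fin (m+1), G i j.castSucc = 1 := hcs _
    rw [Fin.sum_univ_castSucc] at h1
    have h2 : 0 ≤ G (Fin.last m) j.castSucc := hGnn _ _
    simp only [hAdef, Matrix.submatrix_apply]
    linarith
  constructor
  · constructor
    · -- ρ(A) < 1 → ∃ ν1
      intro hρ
      -- 1 is not in the spectrum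
      have h1spec : (1 : ℂ) ∉ spectrum ℂ (A.map (algebraMap ℝ ℂ)) := by
        intro hmem
        have hb : ∀ μ : ℂ, μ ∈ spectrum ℂ (A.map (algebraMap ℝ ℂ)) → ‖μ‖ ≤ 1 := by
          intro μ hμ
          refine spec_abs_le_of_weight A hAnn (fun _ => 1) (fun _ => one_pos) 1 ?_ hμ
          intro j
          simpa [Matrix.mulVec, dotProduct, Matrix.transpose_apply] using hAcol j
        have hbdd : BddAbove (Set.range fun μ : ℂ =>
            ⨆ _ : μ ∈ spectrum ℂ (A.map (algebraMap ℝ ℂ)), ‖μ‖) := by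
          refine ⟨1, Set.forall_mem_range.mpr fun μ => ?_⟩
          by_cases hμ : μ ∈ spectrum ℂ (A.map (algebraMap ℝ ℂ))
          · rw [ciSup_pos hμ]; exact hb μ hμ
          · exact Real.iSup_le (fun h => (hμ h).elim) zero_le_one
        have hle : (1 : ℝ) ≤ specRad A := by
          have := le_ciSup hbdd (1 : ℂ)
          rw [ciSup_pos hmem] at this
          simpa [specRad] using this
        linarith
      have hunit : IsUnit ((1 : Matrix (Fin m) (Fin m) ℂ) - A.map (algebraMap ℝ ℂ)) := by
        have := spectrum.notMem_iff.mp h1spec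
        simpa using this
      have hdetC : ((1 : Matrix (Fin m) (Fin m) ℂ) - A.map (algebraMap ℝ ℂ)).det ≠ 0 :=
        isUnit_iff_ne_zero.mp ((Matrix.isUnit_iff_isUnit_det _).mp hunit)
      have hmap : (1 : Matrix (Fin m) (Fin m) ℂ) - A.map (algebraMap ℝ ℂ) =
          ((1 : Matrix (Fin m) (Fin m) ℝ) - A).map (algebraMap ℝ ℂ) := by
        ext i j
        by_cases hij : i = j <;>
          simp [Matrix.map_apply, Matrix.sub_apply, Matrix.one_apply, hij,
            Complex.ofReal_sub, Complex.ofReal_one]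
      have hdetR : ((1 : Matrix (Fin m) (Fin m) ℝ) - A).det ≠ 0 := by
        intro h0
        apply hdetC
        rw [hmap, ← RingHom.mapMatrix_apply, ← RingHom.map_det, h0, map_zero]
      have hdetT : ((1 : Matrix (Fin m) (Fin m) ℝ) - Aᵀ).det ≠ 0 := by
        have : (1 : Matrix (Fin m) (Fin m) ℝ) - Aᵀ = ((1 : Matrix (Fin m) (Fin m) ℝ) - A)ᵀ := by
          rw [Matrix.transpose_sub, Matrix.transpose_one]
        rw [this, Matrix.det_transpose]; exact hdetR
      set B := ((1 : Matrix (Fin m) (Fin m) ℝ) - Aᵀ)⁻¹ with hB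
      have hBmul : ((1 : Matrix (Fin m) (Fin m) ℝ) - Aᵀ) * B = 1 :=
        Matrix.mul_nonsing_inv _ (isUnit_iff_ne_zero.mpr hdetT)
      set ν1 : Fin m → ℝ := B *ᵥ (fun _ => 1) with hν1
      have heq : ∀ j, ν1 j - (Aᵀ *ᵥ ν1) j = 1 := by
        intro j
        have : ((1 : Matrix (Fin m) (Fin m) ℝ) - Aᵀ) *ᵥ ν1 = fun _ => (1 : ℝ) := by
          rw [hν1, Matrix.mulVec_mulVec, hBmul, Matrix.one_mulVec]
        have := congrFun this j
        rw [Matrix.sub_mulVec] at this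
        simpa [Matrix.one_mulVec] using this
      have hpos : ∀ j, 0 < ν1 j := by
        by_contra hcon
        push_neg at hcon
        obtain ⟨j, hj⟩ := hcon
        obtain ⟨j0, _, hmin⟩ := Finset.exists_min_image Finset.univ ν1 ⟨j, mem_univ _⟩
        have hj0 : ν1 j0 ≤ 0 := le_trans (hmin j (mem_univ _)) hj
        have h1 : ν1 j0 = 1 + (Aᵀ *ᵥ ν1) j0 := by have := heq j0; linarith
        have h2 : (∑ i, A i j0) * ν1 j0 ≤ (Aᵀ *ᵥ ν1) j0 := by
          have : (Aᵀ *ᵥ ν1) j0 = ∑ i, A i j0 * ν1 i := by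
            simp [Matrix.mulVec, dotProduct, Matrix.transpose_apply]
          rw [this, Finset.sum_mul]
          exact Finset.sum_le_sum fun i _ =>
            mul_le_mul_of_nonneg_left (hmin i (mem_univ _)) (hAnn i j0)
        have h3 : ν1 j0 ≤ (∑ i, A i j0) * ν1 j0 := by
          have := mul_le_mul_of_nonpos_right (hAcol j0) hj0
          simpa using this
        linarith
      exact ⟨ν1, hpos, fun i => by have := heq i; linarith⟩
    · -- ∃ ν1 → ρ(A) < 1
      rintro ⟨ν1, hν1pos, hν1⟩
      by_cases hm : Nonempty (Fin m)
      · set c : ℝ := Finset.univ.sup' (Finset.univ_nonempty) (fun j => (Aᵀ *ᵥ ν1) j / ν1 j)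
          with hc
        have hclt : c < 1 := by
          rw [hc, Finset.sup'_lt_iff]
          intro j _
          rw [div_lt_one (hν1pos j)]
          have := hν1 j; linarith
        have hc0 : 0 ≤ c := by
          obtain ⟨j⟩ := hm
          refine le_trans ?_ (Finset.le_sup' _ (mem_univ j))
          refine div_nonneg ?_ (hν1pos j).le
          simp only [Matrix.mulVec, dotProduct, Matrix.transpose_apply]
          exact Finset.sum_nonneg fun i _ => mul_nonneg (hAnn i j) (hν1pos i).le
        have hbound : ∀ j, (Aᵀ *ᵥ ν1) j ≤ c * ν1 j := by
          intro j
          have := Finset.le_sup' (fun j => (Aᵀ *ᵥ ν1) j / ν1 j) (mem_univ j)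
          rw [← hc] at this
          exact (div_le_iff₀ (hν1pos j)).mp this
        have : specRad A ≤ c := by
          refine Real.iSup_le (fun μ => Real.iSup_le (fun hμ => ?_) hc0) hc0
          exact spec_abs_le_of_weight A hAnn ν1 hν1pos c hbound hμ
        linarith
      · have : specRad A ≤ 0 := by
          refine Real.iSup_le (fun μ => Real.iSup_le (fun hμ => ?_) le_rfl) le_rfl
          exact spec_abs_le_of_weight A hAnn ν1 hν1pos 0
            (fun j => absurd ⟨j⟩ hm) hμ
        linarith
  · -- Lyapunov part
    intro ν1 hν1pos hν1
    have hsingle_ne : ∀ k : Fin (m+1), (Pi.single k 1 : Fin (m+1) → ℝ) ≠ Pi.single (Fin.last m) 1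
        → k ≠ Fin.last m := by
      intro k hne hk; exact hne (by rw [hk])
    refine ⟨?_, ?_, ?_⟩
    · rintro y ⟨k, rfl⟩ hne
      obtain ⟨i, rfl⟩ := Fin.exists_castSucc_eq.mpr (hsingle_ne k hne)
      rw [dotProduct_single]
      simpa [Fin.snoc_castSucc] using hν1pos i
    · rw [dotProduct_single]
      simp [Fin.snoc_last]
    · rintro y ⟨k, rfl⟩ hne
      obtain ⟨j, rfl⟩ := Fin.exists_castSucc_eq.mpr (hsingle_ne k hne)
      rw [dotProduct_single, Matrix.mulVec_single]
      have hlhs : (Fin.snoc ν1 0 : Fin (m+1) → ℝ) ⬝ᵥ (fun i => G i j.castSucc * 1)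
          = (Aᵀ *ᵥ ν1) j := by
        simp only [dotProduct, mul_one]
        rw [Fin.sum_univ_castSucc]
        simp only [Fin.snoc_castSucc, Fin.snoc_last, zero_mul, add_zero]
        simp [Matrix.mulVec, dotProduct, Matrix.transpose_apply, hAdef, mul_comm]
      rw [show MulOpposite.op (1:ℝ) • G.col j.castSucc = (fun i => G i j.castSucc * 1) by ext i; simp,
        hlhs, Fin.snoc_castSucc, mul_one]
      have := hν1 j; linarith
end
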